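/- Suppose K = F₂. Let S be a basis of X and let T be a subset of S. If T is a nice basis of its span Span(T) (with respect to the restriction of ω to Span(T)), then S is a nice basis of X. -/
import Mathlib


/-- A basis `S` (with quadratic form `Q = Q_S`) is *nice* if for every
`χ ∈ 𝔽₂` and all `α, β ∈ X*` there is an `x ∈ X` with
`(Q_S + α)(x) = (Q_S + β)(x) = χ` and `ω(x) ∉ {α, β}`.  (The quadratic form
`Q_S` is characterized by `Q_S(s) = 1` on `S` and polarization `ω`.) -/
def IsNice {X : Type*} [AddCommGroup X] [Module (ZMod 2) X]
    (ω : X →ₗ[ZMod 2] X →ₗ[ZMod 2] ZMod 2) (S : Set X) : Prop :=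
  ∀ Q : X → ZMod 2, (∀ s ∈ S, Q s = 1) →
    (∀ x y, Q (x + y) + Q x + Q y = ω x y) →
    ∀ χ : ZMod 2, ∀ α β : Module.Dual (ZMod 2) X,
      ∃ x, Q x + α x = χ ∧ Q x + β x = χ ∧ ω x ≠ α ∧ ω x ≠ β

/-- over `K = 𝔽₂`, if `S` is a basis of `X`, `T ⊆ S`, and `T`
is a nice basis of `Span T` (with respect to the restriction of `ω`), then
`S` is a nice basis of `X`. -/
theorem stmt13 {X : Type*} [AddCommGroup X] [Module (ZMod 2) X]
    [FiniteDimensional (ZMod 2) X]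
    (ω : X →ₗ[ZMod 2] X →ₗ[ZMod 2] ZMod 2) (halt : ∀ x, ω x x = 0)
    (S : Set X) (hind : LinearIndependent (ZMod 2) ((↑) : S → X))
    (hspan : Submodule.span (ZMod 2) S = ⊤)
    (T : Set X) (hTS : T ⊆ S)
    (hnice : IsNice
      (ω.compl₁₂ (Submodule.span (ZMod 2) T).subtype (Submodule.span (ZMod 2) T).subtype)
      {y : Submodule.span (ZMod 2) T | (y : X) ∈ T}) :
    IsNice ω S := by
  intro Q hQ1 hpol χ α β
  set V := Submodule.span (ZMod 2) T
  obtain ⟨y, h1, h2, h3, h4⟩ := hnice (fun v : V => Q v)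
    (fun s hs => hQ1 s (hTS hs))
    (fun x y => by simpa using hpol x y)
    χ (α.comp V.subtype) (β.comp V.subtype)
  refine ⟨(y : X), h1, h2, ?_, ?_⟩
  · intro h; exact h3 (by ext v; simp [h])
  · intro h; exact h4 (by ext v; simp [h])
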